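/- Fix 0 < p < 1 and let F_p(α) = p²α^{−2} + 2p(2−p) + (2−p)²α² − 4(α^{−p} + α^{2−p} − 1). The equation F_p(α) = 0 has a unique solution α_p in the open interval (0,1). Moreover: (a) F_p(α) > 0 for 0 < α < α_p; (b) F_p(α) < 0 for α_p < α < 1; and (c) α₁ < α_p < α₂, where α₁ is the unique solution in (0,1) of 1 + α² = 2α^p and α₂ = √(p/(2−p)). -/

import Mathlib

/-- The function `F_p(α) = p²α^{-2} + 2p(2-p) + (2-p)²α² - 4(α^{-p} + α^{2-p} - 1)`. -/
noncomputable def Fp (p a : ℝ) : ℝ :=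
  p ^ 2 * a ^ (-2 : ℝ) + 2 * p * (2 - p) + (2 - p) ^ 2 * a ^ 2
    - 4 * (a ^ (-p) + a ^ (2 - p) - 1)

/-!
For `α > 0`, `F_p(α) = N/α² - B` with `N = (p + (2-p)α²)² + 4α²` and `B = 4α^{-p}(1 + α²)`, so
`F_p(α)` has the sign of `log (N/α²) - log B = FpLog p α`. The derivative of `FpLog p` is
`p(2-p)(α²-1)²((2-p)α² - p) / (α N (1+α²))`, so `FpLog p` decreases on `(0, α₂]` and increases on
`[α₂, 1]` up to `FpLog p 1 = 0`; as it is positive near `0`, it has exactly one zero `α_p` in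
`(0, 1)`, lying in `(0, α₂)`.

At `α₁` we have `B = 8`, so `α₁² F_p(α₁) = (1 - α₁²)(p - (2-p)α₁)(p + (2-p)α₁)`, which is positive
because `(2-p)α₁ < p`. Since `log ((1 + α₁²)/2) = p log α₁`, this last inequality is the bound
`(1 + x) log ((1 + x²)/2) < 2x log x` on `(0, 1)`, obtained by differentiating twice.
Hence `F_p(α₁) > 0`, i.e. `α₁ < α_p`.
-/

open Real Set

noncomputable def FpNum (p x : ℝ) : ℝ := (p + (2 - p) * x ^ 2) ^ 2 + 4 * x ^ 2

noncomputable def FpLog (p x : ℝ) : ℝ :=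
  (p - 2) * log x + log (FpNum p x) - log (4 * (1 + x ^ 2))

lemma FpNum_pos (p : ℝ) {x : ℝ} (hx : 0 < x) : 0 < FpNum p x := by
  unfold FpNum; positivity

lemma Fp_eq_sub {p x : ℝ} (hx : 0 < x) :
    Fp p x = FpNum p x / x ^ 2 - 4 * (x ^ (-p) * (1 + x ^ 2)) := by
  have h2 : x ^ (2 - p) = x ^ 2 * x ^ (-p) := by
    rw [sub_eq_add_neg, rpow_add hx, rpow_two]
  have hm2 : x ^ (-2 : ℝ) = (x ^ 2)⁻¹ := by rw [rpow_neg hx.le, rpow_two]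
  rw [Fp, FpNum, h2, hm2]
  field_simp
  ring

lemma FpLog_eq_log_sub {p x : ℝ} (hx : 0 < x) :
    FpLog p x = log (FpNum p x / x ^ 2) - log (4 * (x ^ (-p) * (1 + x ^ 2))) := by
  have h1 : (0 : ℝ) < 1 + x ^ 2 := by positivity
  rw [log_div (FpNum_pos p hx).ne' (by positivity), log_mul (by norm_num) (by positivity),
    log_mul (by positivity) h1.ne', log_rpow hx, FpLog, log_mul (by norm_num) h1.ne', log_pow]
  push_cast
  ring

lemma Fp_pos_iff {p x : ℝ} (hx : 0 < x) : 0 < Fp p x ↔ 0 < FpLog p x := by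
  rw [Fp_eq_sub hx, FpLog_eq_log_sub hx, sub_pos, sub_pos,
    log_lt_log_iff (by positivity) (div_pos (FpNum_pos p hx) (by positivity))]

lemma Fp_neg_iff {p x : ℝ} (hx : 0 < x) : Fp p x < 0 ↔ FpLog p x < 0 := by
  rw [Fp_eq_sub hx, FpLog_eq_log_sub hx, sub_neg, sub_neg,
    log_lt_log_iff (div_pos (FpNum_pos p hx) (by positivity)) (by positivity)]

lemma Fp_eq_zero_of_FpLog_eq_zero {p x : ℝ} (hx : 0 < x) (h : FpLog p x = 0) : Fp p x = 0 := by
  rw [FpLog_eq_log_sub hx, sub_eq_zero] at h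
  rw [Fp_eq_sub hx, sub_eq_zero]
  exact log_injOn_pos (div_pos (FpNum_pos p hx) (by positivity)) (by positivity : (0 : ℝ) < _) h

lemma hasDerivAt_FpLog (p : ℝ) {x : ℝ} (hx : 0 < x) :
    HasDerivAt (FpLog p)
      (p * (2 - p) * (x ^ 2 - 1) ^ 2 * ((2 - p) * x ^ 2 - p) / (x * FpNum p x * (1 + x ^ 2)))
      x := by
  have hsq : HasDerivAt (fun y : ℝ => y ^ 2) (2 * x) x := by simpa using hasDerivAt_pow 2 x
  have hnum : HasDerivAt (FpNum p)
      (2 * (p + (2 - p) * x ^ 2) * ((2 - p) * (2 * x)) + 4 * (2 * x)) x := by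
    refine (((hsq.const_mul (2 - p)).const_add p).pow 2 |>.add (hsq.const_mul 4)).congr_deriv ?_
    ring
  refine ((((hasDerivAt_log hx.ne').const_mul (p - 2)).add (hnum.log (FpNum_pos p hx).ne')).sub
    (((hsq.const_add 1).const_mul 4).log (by positivity))).congr_deriv ?_
  have := (FpNum_pos p hx).ne'
  field_simp
  unfold FpNum
  ring

lemma sqrt_mem_Ioo {p : ℝ} (hp0 : 0 < p) (hp1 : p < 1) : √(p / (2 - p)) ∈ Ioo 0 1 :=
  ⟨sqrt_pos.2 (div_pos hp0 (by linarith)),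
    (sqrt_lt' one_pos).2 (by rw [one_pow, div_lt_one (by linarith)]; linarith)⟩

lemma strictAntiOn_FpLog {p : ℝ} (hp0 : 0 < p) (hp1 : p < 1) :
    StrictAntiOn (FpLog p) (Ioc 0 √(p / (2 - p))) := by
  refine strictAntiOn_of_hasDerivWithinAt_neg (convex_Ioc _ _)
    (fun x hx => (hasDerivAt_FpLog p hx.1).continuousAt.continuousWithinAt)
    (fun x hx => (hasDerivAt_FpLog p (interior_subset hx).1).hasDerivWithinAt) ?_
  rw [interior_Ioc]
  rintro x ⟨hx0, hxs⟩
  have hx1 : x < 1 := hxs.trans (sqrt_mem_Ioo hp0 hp1).2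
  have hxp : (2 - p) * x ^ 2 < p := by
    rw [lt_sqrt hx0.le, lt_div_iff₀ (by linarith)] at hxs
    linarith
  have := FpNum_pos p hx0
  exact div_neg_of_neg_of_pos (mul_neg_of_pos_of_neg
    (mul_pos (mul_pos hp0 (by linarith)) (sq_pos_of_neg (by nlinarith))) (by linarith))
    (by positivity)

lemma strictMonoOn_FpLog {p : ℝ} (hp0 : 0 < p) (hp2 : p < 2) :
    StrictMonoOn (FpLog p) (Icc √(p / (2 - p)) 1) := by
  have hs0 : 0 < √(p / (2 - p)) := sqrt_pos.2 (div_pos hp0 (by linarith))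
  refine strictMonoOn_of_hasDerivWithinAt_pos (convex_Icc _ _)
    (fun x hx => (hasDerivAt_FpLog p (hs0.trans_le hx.1)).continuousAt.continuousWithinAt)
    (fun x hx => (hasDerivAt_FpLog p (hs0.trans_le (interior_subset hx).1)).hasDerivWithinAt) ?_
  rw [interior_Icc]
  rintro x ⟨hsx, hx1⟩
  have hx0 := hs0.trans hsx
  have hxp : p < (2 - p) * x ^ 2 := by
    rw [sqrt_lt' hx0, div_lt_iff₀ (by linarith)] at hsx
    linarith
  have := FpNum_pos p hx0
  exact div_pos (mul_pos (mul_pos (mul_pos hp0 (by linarith)) (sq_pos_of_neg (by nlinarith)))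
    (by linarith)) (by positivity)

lemma FpLog_one (p : ℝ) : FpLog p 1 = 0 := by
  norm_num [FpLog, FpNum]

lemma FpLog_neg_of_sqrt_le {p x : ℝ} (hp0 : 0 < p) (hp2 : p < 2) (hsx : √(p / (2 - p)) ≤ x)
    (hx1 : x < 1) : FpLog p x < 0 := by
  simpa [FpLog_one] using
    strictMonoOn_FpLog hp0 hp2 ⟨hsx, hx1.le⟩ ⟨hsx.trans hx1.le, le_rfl⟩ hx1

lemma FpLog_pos_of_log_le {p x : ℝ} (hp0 : 0 < p) (hp2 : p ≤ 2) (hx0 : 0 < x) (hx1 : x ≤ 1)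
    (hx : (2 - p) * log x ≤ log (p ^ 2 / 16)) : 0 < FpLog p x := by
  have hnum : log (p ^ 2) ≤ log (FpNum p x) :=
    log_le_log (by positivity) (by
      have : 0 ≤ (2 - p) * x ^ 2 := mul_nonneg (by linarith) (sq_nonneg x)
      unfold FpNum; nlinarith)
  have hden : log (4 * (1 + x ^ 2)) ≤ log 8 := log_le_log (by positivity) (by nlinarith)
  have h16 : log 16 = log 8 + log 2 := by rw [← log_mul (by norm_num) (by norm_num)]; norm_num
  rw [log_div (by positivity) (by norm_num)] at hx
  -- with `N ≥ p²` and `4(1 + x²) ≤ 8`, the hypothesis leaves the margin `FpLog p x ≥ log 2`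
  unfold FpLog
  linarith [log_pos (by norm_num : (1 : ℝ) < 2)]

lemma exists_FpLog_pos {p : ℝ} (hp0 : 0 < p) (hp2 : p < 2) : ∃ x ∈ Ioo 0 1, 0 < FpLog p x := by
  have hlog : log (p ^ 2 / 16) < 0 :=
    log_neg (by positivity) ((div_lt_one (by norm_num)).2 (by nlinarith))
  refine ⟨exp (log (p ^ 2 / 16) / (2 - p)), ⟨exp_pos _, exp_lt_one_iff.2 ?_⟩,
    FpLog_pos_of_log_le hp0 hp2.le (exp_pos _) (exp_le_one_iff.2 ?_) ?_⟩
  · exact div_neg_of_neg_of_pos hlog (by linarith)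
  · exact (div_neg_of_neg_of_pos hlog (by linarith)).le
  · rw [log_exp, mul_div_cancel₀ _ (by linarith)]

lemma exists_FpLog_zero {p : ℝ} (hp0 : 0 < p) (hp1 : p < 1) :
    ∃ ap, 0 < ap ∧ ap < √(p / (2 - p)) ∧ FpLog p ap = 0
      ∧ (∀ a, 0 < a → a < ap → 0 < FpLog p a) ∧ (∀ a, ap < a → a < 1 → FpLog p a < 0) := by
  set s := √(p / (2 - p))
  have hp2 : p < 2 := by linarith
  have hs1 := (sqrt_mem_Ioo hp0 hp1).2
  have hFs := FpLog_neg_of_sqrt_le hp0 hp2 le_rfl hs1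
  obtain ⟨x₀, ⟨hx₀, hx₀1⟩, hFx₀⟩ := exists_FpLog_pos hp0 hp2
  have hx₀s : x₀ < s := not_le.1 fun h => (FpLog_neg_of_sqrt_le hp0 hp2 h hx₀1).not_gt hFx₀
  obtain ⟨ap, hap, hFap⟩ := intermediate_value_Icc' hx₀s.le
    (fun x hx => (hasDerivAt_FpLog p (hx₀.trans_le hx.1)).continuousAt.continuousWithinAt)
    ⟨hFs.le, hFx₀.le⟩
  have hap0 : 0 < ap := hx₀.trans_le hap.1
  have haps : ap < s := hap.2.lt_of_ne (by rintro rfl; exact hFs.ne hFap)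
  refine ⟨ap, hap0, haps, hFap, fun a ha0 ha => ?_, fun a ha ha1 => ?_⟩
  · simpa [hFap] using strictAntiOn_FpLog hp0 hp1 ⟨ha0, (ha.trans haps).le⟩ ⟨hap0, haps.le⟩ ha
  · rcases le_or_gt a s with has | has
    · simpa [hFap] using strictAntiOn_FpLog hp0 hp1 ⟨hap0, haps.le⟩ ⟨hap0.trans ha, has⟩ ha
    · exact FpLog_neg_of_sqrt_le hp0 hp2 has.le ha1

noncomputable def logGap (x : ℝ) : ℝ := 2 * x * log x - (1 + x) * log ((1 + x ^ 2) / 2)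

noncomputable def logGapDeriv (x : ℝ) : ℝ :=
  2 * log x + 2 - log ((1 + x ^ 2) / 2) - 2 * x * (1 + x) / (1 + x ^ 2)

lemma hasDerivAt_log_half_one_add_sq (x : ℝ) :
    HasDerivAt (fun y => log ((1 + y ^ 2) / 2)) (2 * x / (1 + x ^ 2)) x := by
  refine ((((hasDerivAt_pow 2 x).const_add 1).div_const 2).log (by positivity)).congr_deriv ?_
  field_simp
  ring

lemma hasDerivAt_logGap {x : ℝ} (hx : 0 < x) : HasDerivAt logGap (logGapDeriv x) x := by
  refine ((((hasDerivAt_id x).const_mul 2).mul (hasDerivAt_log hx.ne')).sub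
    (((hasDerivAt_id x).const_add 1).mul (hasDerivAt_log_half_one_add_sq x))).congr_deriv ?_
  simp only [id_eq, logGapDeriv]
  field_simp
  ring

lemma hasDerivAt_logGapDeriv {x : ℝ} (hx : 0 < x) :
    HasDerivAt logGapDeriv (2 * (1 - x) ^ 2 * (1 + x) / (x * (1 + x ^ 2) ^ 2)) x := by
  have hquot := (((hasDerivAt_id x).const_mul 2).mul ((hasDerivAt_id x).const_add 1)).div
    ((hasDerivAt_pow 2 x).const_add 1) (by positivity : (1 + x ^ 2) ≠ 0)
  refine (((((hasDerivAt_log hx.ne').const_mul 2).add_const 2).sub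
    (hasDerivAt_log_half_one_add_sq x)).sub hquot).congr_deriv ?_
  simp only [id_eq, Pi.mul_apply]
  field_simp
  ring

lemma logGapDeriv_neg {x : ℝ} (hx0 : 0 < x) (hx1 : x < 1) : logGapDeriv x < 0 := by
  have hmono : StrictMonoOn logGapDeriv (Ioc 0 1) := by
    refine strictMonoOn_of_hasDerivWithinAt_pos (convex_Ioc _ _)
      (fun y hy => (hasDerivAt_logGapDeriv hy.1).continuousAt.continuousWithinAt)
      (fun y hy => (hasDerivAt_logGapDeriv (interior_subset hy).1).hasDerivWithinAt) ?_
    rw [interior_Ioc]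
    rintro y ⟨hy0, hy1⟩
    have : 0 < (1 - y) ^ 2 := pow_pos (by linarith) 2
    positivity
  simpa [logGapDeriv] using hmono ⟨hx0, hx1.le⟩ ⟨one_pos, le_rfl⟩ hx1

lemma logGap_pos {x : ℝ} (hx0 : 0 < x) (hx1 : x < 1) : 0 < logGap x := by
  have hanti : StrictAntiOn logGap (Ioc 0 1) :=
    strictAntiOn_of_hasDerivWithinAt_neg (convex_Ioc _ _)
      (fun y hy => (hasDerivAt_logGap hy.1).continuousAt.continuousWithinAt)
      (fun y hy => (hasDerivAt_logGap (interior_subset hy).1).hasDerivWithinAt)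
      (by rw [interior_Ioc]; exact fun y hy => logGapDeriv_neg hy.1 hy.2)
  simpa [logGap] using hanti ⟨hx0, hx1.le⟩ ⟨one_pos, le_rfl⟩ hx1

lemma two_sub_mul_lt_of_one_add_sq_eq {p x : ℝ} (hx0 : 0 < x) (hx1 : x < 1)
    (hx : 1 + x ^ 2 = 2 * x ^ p) : (2 - p) * x < p := by
  have hlog : log ((1 + x ^ 2) / 2) = p * log x := by
    rw [hx, mul_div_cancel_left₀ _ two_ne_zero, log_rpow hx0]
  have hgap := logGap_pos hx0 hx1
  rw [logGap, hlog] at hgap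
  have := neg_of_mul_pos_left (a := 2 * x - (1 + x) * p) (by linarith) (log_neg hx0 hx1).le
  linarith

lemma Fp_pos_of_one_add_sq_eq {p x : ℝ} (hp0 : 0 < p) (hx0 : 0 < x) (hx1 : x < 1)
    (hx : 1 + x ^ 2 = 2 * x ^ p) : 0 < Fp p x := by
  have hlt := two_sub_mul_lt_of_one_add_sq_eq hx0 hx1 hx
  have hrpow : x ^ (-p) * (1 + x ^ 2) = 2 := by
    rw [hx, mul_left_comm, ← rpow_add hx0, neg_add_cancel, rpow_zero, mul_one]
  have hnum : FpNum p x - 8 * x ^ 2 = (1 - x ^ 2) * ((p - (2 - p) * x) * (p + (2 - p) * x)) := by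
    unfold FpNum; ring
  have hpos : 0 < FpNum p x - 8 * x ^ 2 := by
    rw [hnum]
    exact mul_pos (by nlinarith) (mul_pos (by linarith) (by nlinarith))
  rw [Fp_eq_sub hx0, hrpow, sub_pos, lt_div_iff₀ (by positivity)]
  linarith

theorem Fp_unique_zero (p a1 : ℝ) (hp0 : 0 < p) (hp1 : p < 1)
    (ha1 : a1 ∈ Set.Ioo (0 : ℝ) 1) (ha1eq : 1 + a1 ^ 2 = 2 * a1 ^ p) :
    ∃ ap ∈ Set.Ioo (0 : ℝ) 1, Fp p ap = 0
      ∧ (∀ x ∈ Set.Ioo (0 : ℝ) 1, Fp p x = 0 → x = ap)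
      ∧ (∀ a, 0 < a → a < ap → 0 < Fp p a)
      ∧ (∀ a, ap < a → a < 1 → Fp p a < 0)
      ∧ a1 < ap ∧ ap < Real.sqrt (p / (2 - p)) := by
  obtain ⟨ap, hap0, haps, hzero, hbelow, habove⟩ := exists_FpLog_zero hp0 hp1
  have hFap : Fp p ap = 0 := Fp_eq_zero_of_FpLog_eq_zero hap0 hzero
  have hpos : ∀ a, 0 < a → a < ap → 0 < Fp p a := fun a ha0 ha =>
    (Fp_pos_iff ha0).2 (hbelow a ha0 ha)
  have hneg : ∀ a, ap < a → a < 1 → Fp p a < 0 := fun a ha ha1 =>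
    (Fp_neg_iff (hap0.trans ha)).2 (habove a ha ha1)
  have hFa1 : 0 < Fp p a1 := Fp_pos_of_one_add_sq_eq hp0 ha1.1 ha1.2 ha1eq
  refine ⟨ap, ⟨hap0, haps.trans (sqrt_mem_Ioo hp0 hp1).2⟩, hFap, fun x hx hFx => ?_, hpos, hneg,
    ?_, haps⟩
  · rcases lt_trichotomy x ap with h | h | h
    · exact absurd hFx (hpos x hx.1 h).ne'
    · exact h
    · exact absurd hFx (hneg x h hx.2).ne
  · by_contra! h
    obtain h | rfl := h.lt_or_eq
    · exact (hneg a1 h ha1.2).not_gt hFa1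
    · exact hFa1.ne' hFap
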